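/- arXiv:2402.08710 — 3 statements merged into one kernel-verified Lean document; each statement's English description precedes it below -/
import Mathlib

section
/- Let C > 1, c₂ > 0, and suppose for a prime p one has p^(c₂/2) > 2C. Let j₀ = 1 + ⌊4/c₂ + 2c₁/c₂⌋ where c₁ > 0 is fixed, and let F be a multiplicative function with F(p^e) ≤ min{c₀/p, p^(c₁ − e c₂)} for all e ≥ 1. Then Σ_{j=1}^∞ C^j F(p^j) ≤ j₀ C^(j₀) c₀/p + 2/p², and in particular this sum is at most ν₁/p for some constant ν₁ depending only on C, c₀, c₁, c₂. -/
/-! Split the sum at `j₀`. The first `j₀` terms are each at most `C ^ j₀ * c₀ / p`. Beyond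
`j₀`, `C ^ e * p ^ (c₁ - e c₂) = (C / p ^ (c₂ / 2)) ^ e * p ^ (c₁ - e c₂ / 2)`, where the first
factor is at most `2⁻ᵉ` because `p ^ (c₂ / 2) > 2C`, and the second at most `p⁻²` by the choice
of `j₀`; so the tail is dominated by a geometric series of total mass `2 / p²`. -/

open Finset

lemma tsum_le_of_le_of_le_geometric {f : ℕ → ℝ} (hf : ∀ n, 0 ≤ f n) {J : ℕ} {a b : ℝ}
    (head : ∀ i < J, f i ≤ a) (tail : ∀ i, f (i + J) ≤ (1 / 2) ^ i * b) :
    ∑' n, f n ≤ J * a + 2 * b := by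
  have hgeom : Summable fun i : ℕ => (1 / 2 : ℝ) ^ i * b := summable_geometric_two.mul_right b
  have htail : Summable fun i => f (i + J) := .of_nonneg_of_le (fun i => hf _) tail hgeom
  rw [← ((summable_nat_add_iff J).mp htail).sum_add_tsum_nat_add J]
  gcongr
  · simpa using sum_le_card_nsmul (range J) f a fun i hi => head i (mem_range.mp hi)
  · calc ∑' i, f (i + J) ≤ ∑' i : ℕ, (1 / 2 : ℝ) ^ i * b := htail.tsum_le_tsum tail hgeom
      _ = 2 * b := by rw [tsum_mul_right, tsum_geometric_two]

lemma pow_mul_rpow_sub_le {p C c₁ c₂ : ℝ} (hp : 1 ≤ p) (hC : 0 ≤ C)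
    (hpC : 2 * C < p ^ (c₂ / 2)) {e : ℕ} (he : 2 * c₁ + 4 ≤ e * c₂) :
    C ^ e * p ^ (c₁ - e * c₂) ≤ (1 / 2) ^ e / p ^ 2 := by
  have hp0 : 0 < p := one_pos.trans_le hp
  have hq0 : 0 < p ^ (c₂ / 2) := Real.rpow_pos_of_pos hp0 _
  have hsplit : C ^ e * p ^ (c₁ - e * c₂) = (C / p ^ (c₂ / 2)) ^ e * p ^ (c₁ - e * c₂ / 2) := by
    rw [div_pow, ← Real.rpow_natCast (p ^ (c₂ / 2)), ← Real.rpow_mul hp0.le, div_mul_eq_mul_div,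
      mul_div_assoc, ← Real.rpow_sub hp0]
    ring_nf
  have hratio : C / p ^ (c₂ / 2) ≤ 1 / 2 := by
    rw [div_le_div_iff₀ hq0 two_pos]
    linarith
  have hpow : p ^ (c₁ - e * c₂ / 2) ≤ 1 / p ^ 2 := by
    calc p ^ (c₁ - e * c₂ / 2) ≤ p ^ (-2 : ℝ) := Real.rpow_le_rpow_of_exponent_le hp (by linarith)
      _ = 1 / p ^ 2 := by rw [Real.rpow_neg hp0.le, one_div]; norm_cast
  rw [hsplit, ← mul_one_div ((1 / 2 : ℝ) ^ e)]
  gcongr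

theorem tsum_pow_mul_le_of_le_min {p C c₀ c₁ c₂ : ℝ} {a : ℕ → ℝ} (hp : 1 ≤ p) (hC : 1 ≤ C)
    (hc₂ : 0 ≤ c₂) (hpC : 2 * C < p ^ (c₂ / 2)) (ha : ∀ e, 0 ≤ a e)
    (ha_le : ∀ e, 1 ≤ e → a e ≤ min (c₀ / p) (p ^ (c₁ - e * c₂))) {J : ℕ}
    (hJ : 2 * c₁ + 4 ≤ J * c₂) :
    ∑' j, C ^ (j + 1) * a (j + 1) ≤ J * C ^ J * c₀ / p + 2 / p ^ 2 := by
  have hC0 : 0 ≤ C := zero_le_one.trans hC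
  have head : ∀ i < J, C ^ (i + 1) * a (i + 1) ≤ C ^ J * (c₀ / p) := fun i hi => by
    have hac₀ := (ha_le (i + 1) i.succ_pos).trans (min_le_left _ _)
    calc C ^ (i + 1) * a (i + 1) ≤ C ^ (i + 1) * (c₀ / p) := by gcongr
      _ ≤ C ^ J * (c₀ / p) :=
        mul_le_mul_of_nonneg_right (pow_le_pow_right₀ hC hi) ((ha _).trans hac₀)
  have tail : ∀ i, C ^ (i + J + 1) * a (i + J + 1) ≤ (1 / 2) ^ i * (1 / p ^ 2) := fun i => by
    have he : 2 * c₁ + 4 ≤ ((i + J + 1 : ℕ) : ℝ) * c₂ :=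
      hJ.trans (by gcongr; exact_mod_cast (by omega : J ≤ i + J + 1))
    calc C ^ (i + J + 1) * a (i + J + 1)
        ≤ C ^ (i + J + 1) * p ^ (c₁ - ((i + J + 1 : ℕ) : ℝ) * c₂) := by
          gcongr
          exact (ha_le _ (by omega)).trans (min_le_right _ _)
      _ ≤ (1 / 2) ^ (i + J + 1) / p ^ 2 := pow_mul_rpow_sub_le hp hC0 hpC he
      _ ≤ (1 / 2) ^ i * (1 / p ^ 2) := by
        rw [← mul_one_div]
        exact mul_le_mul_of_nonneg_right
          (pow_le_pow_of_le_one (by norm_num) (by norm_num) (by omega)) (by positivity)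
  calc ∑' j, C ^ (j + 1) * a (j + 1) ≤ J * (C ^ J * (c₀ / p)) + 2 * (1 / p ^ 2) :=
        tsum_le_of_le_of_le_geometric (fun j => mul_nonneg (pow_nonneg hC0 _) (ha _)) head tail
    _ = J * C ^ J * c₀ / p + 2 / p ^ 2 := by ring

theorem stmt_6_general (c₀ c₁ c₂ C : ℝ) (h₀ : 0 < c₀) (h₂ : 0 < c₂) (hC : 1 < C) :
    (∀ (p : ℕ) (F : ℕ → ℝ), p.Prime → 2 * C < (p : ℝ) ^ (c₂ / 2) →
      (∀ n, 0 ≤ F n) → F 1 = 1 →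
      (∀ m n : ℕ, Nat.Coprime m n → F (m * n) = F m * F n) →
      (∀ q e : ℕ, q.Prime → 1 ≤ e →
        F (q ^ e) ≤ min (c₀ / q) ((q : ℝ) ^ (c₁ - (e : ℝ) * c₂))) →
      (∑' j : ℕ, C ^ (j + 1) * F (p ^ (j + 1))) ≤
        ((1 + ⌊4 / c₂ + 2 * c₁ / c₂⌋₊ : ℕ) : ℝ) * C ^ (1 + ⌊4 / c₂ + 2 * c₁ / c₂⌋₊) * c₀ / p
          + 2 / (p : ℝ) ^ 2)
    ∧ ∃ ν₁ : ℝ, 0 < ν₁ ∧ ∀ (p : ℕ) (F : ℕ → ℝ), p.Prime → 2 * C < (p : ℝ) ^ (c₂ / 2) →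
      (∀ n, 0 ≤ F n) → F 1 = 1 →
      (∀ m n : ℕ, Nat.Coprime m n → F (m * n) = F m * F n) →
      (∀ q e : ℕ, q.Prime → 1 ≤ e →
        F (q ^ e) ≤ min (c₀ / q) ((q : ℝ) ^ (c₁ - (e : ℝ) * c₂))) →
      (∑' j : ℕ, C ^ (j + 1) * F (p ^ (j + 1))) ≤ ν₁ / p := by
  set J : ℕ := 1 + ⌊4 / c₂ + 2 * c₁ / c₂⌋₊
  have hJ : 2 * c₁ + 4 ≤ J * c₂ := by
    have hlt : (4 + 2 * c₁) / c₂ < J := by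
      rw [add_div]
      exact Nat.lt_of_floor_lt (by simp [J])
    linarith [(div_lt_iff₀ h₂).mp hlt]
  have key : ∀ (p : ℕ) (F : ℕ → ℝ), p.Prime → 2 * C < (p : ℝ) ^ (c₂ / 2) → (∀ n, 0 ≤ F n) →
      (∀ q e : ℕ, q.Prime → 1 ≤ e → F (q ^ e) ≤ min (c₀ / q) ((q : ℝ) ^ (c₁ - (e : ℝ) * c₂))) →
      (∑' j : ℕ, C ^ (j + 1) * F (p ^ (j + 1))) ≤ J * C ^ J * c₀ / p + 2 / (p : ℝ) ^ 2 :=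
    fun p F hp hpC hF hFle => tsum_pow_mul_le_of_le_min (a := fun e => F (p ^ e))
      (by exact_mod_cast hp.one_le) hC.le h₂.le hpC (fun e => hF _) (hFle p · hp) hJ
  refine ⟨fun p F hp hpC hF _ _ hFle => key p F hp hpC hF hFle, J * C ^ J * c₀ + 1,
    by positivity, fun p F hp hpC hF _ _ hFle => ?_⟩
  have hp2 : (2 : ℝ) ≤ p := by exact_mod_cast hp.two_le
  have h2p : 2 / (p : ℝ) ^ 2 ≤ 1 / p := by
    rw [div_le_div_iff₀ (by positivity) (by positivity)]
    nlinarith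
  calc (∑' j : ℕ, C ^ (j + 1) * F (p ^ (j + 1))) ≤ J * C ^ J * c₀ / p + 2 / (p : ℝ) ^ 2 :=
        key p F hp hpC hF hFle
    _ ≤ (J * C ^ J * c₀ + 1) / p := by rw [add_div]; linarith

theorem stmt_6 (c₀ c₁ c₂ C : ℝ) (h₀ : 0 < c₀) (h₁ : 0 < c₁) (h₂ : 0 < c₂) (hC : 1 < C) :
    (∀ (p : ℕ) (F : ℕ → ℝ), p.Prime → 2 * C < (p : ℝ) ^ (c₂ / 2) →
      (∀ n, 0 ≤ F n) → F 1 = 1 →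
      (∀ m n : ℕ, Nat.Coprime m n → F (m * n) = F m * F n) →
      (∀ q e : ℕ, q.Prime → 1 ≤ e →
        F (q ^ e) ≤ min (c₀ / q) ((q : ℝ) ^ (c₁ - (e : ℝ) * c₂))) →
      (∑' j : ℕ, C ^ (j + 1) * F (p ^ (j + 1))) ≤
        ((1 + ⌊4 / c₂ + 2 * c₁ / c₂⌋₊ : ℕ) : ℝ) * C ^ (1 + ⌊4 / c₂ + 2 * c₁ / c₂⌋₊) * c₀ / p
          + 2 / (p : ℝ) ^ 2)
    ∧ ∃ ν₁ : ℝ, 0 < ν₁ ∧ ∀ (p : ℕ) (F : ℕ → ℝ), p.Prime → 2 * C < (p : ℝ) ^ (c₂ / 2) →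
      (∀ n, 0 ≤ F n) → F 1 = 1 →
      (∀ m n : ℕ, Nat.Coprime m n → F (m * n) = F m * F n) →
      (∀ q e : ℕ, q.Prime → 1 ≤ e →
        F (q ^ e) ≤ min (c₀ / q) ((q : ℝ) ^ (c₁ - (e : ℝ) * c₂))) →
      (∑' j : ℕ, C ^ (j + 1) * F (p ^ (j + 1))) ≤ ν₁ / p :=
  stmt_6_general c₀ c₁ c₂ C h₀ h₂ hC
end

section
/- Fix a positive constant α₁ and let g : ℕ → [0,∞) be multiplicative with g(p) ≤ α₁/p for all primes p. For all a ∈ ℕ, α₂, α₃ > 0, and x ≥ 2, Σ_{m squarefree, gcd(m,a)=1, p|m ⇒ α₁ < p ≤ x^(α₂)} g(m) ∏_{α₁ < p ≤ x^(α₃), p ∤ am} (1 − g(p))² ≪ 𝒞 · ∏_{α₁ < p ≤ x^(min{α₂,α₃}), p ∤ a} (1 − g(p)), where 𝒞 = ∏_{x^(α₂) < p ≤ x^(α₃), p ∤ a} (1 − g(p))² if α₂ ≤ α₃ and 𝒞 = ∏_{x^(α₃) < p ≤ x^(α₂), p ∤ a} (1 − g(p))^(−1) if α₂ > α₃, and the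 implied constant depends only on α₁. -/
open scoped Classical

/-- The finite set of primes `p` with `lo < p ≤ hi` not dividing `a`. -/
noncomputable def primeRange (lo hi : ℝ) (a : ℕ) : Finset ℕ :=
  (Finset.range (⌊hi⌋₊ + 1)).filter
    (fun p : ℕ => p.Prime ∧ lo < (p : ℝ) ∧ (p : ℝ) ≤ hi ∧ ¬ p ∣ a)

/-!
Let `T` and `U` be the primes counted up to `x ^ α₂` and up to `x ^ α₃`. The divisors of
`∏ p ∈ T, p` are the products over subsets `S ⊆ T`, and for such a divisor the inner product runs
over `U \ S`. By multiplicativity the sum therefore factors as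
`∏_{U \ T} (1 - g p)² · ∏_{p ∈ T} (g p + (1 - g p)²)`, with the factor `g p + 1` instead for
`p ∈ T \ U`. Since `1 - g p` is bounded away from `0` for `p > α₁`, each factor
`g + (1 - g)² = (1 - g) (1 + g² / (1 - g))` exceeds `1 - g p` by a factor `1 + O(1 / p²)`, whose
product converges; and `1 + g ≤ (1 - g)⁻¹`.
-/

open Finset Real

theorem Nat.sum_divisors_prod_primes {M : Type*} [AddCommMonoid M] {T : Finset ℕ}
    (hT : ∀ p ∈ T, p.Prime) (f : ℕ → M) :
    ∑ d ∈ (∏ p ∈ T, p).divisors, f d = ∑ S ∈ T.powerset, f (∏ p ∈ S, p) := by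
  have hsq : Squarefree (∏ p ∈ T, p) :=
    squarefree_prod_of_pairwise_isCoprime (fun p hp q hq hpq =>
        Nat.coprime_iff_isRelPrime.1 ((Nat.coprime_primes (hT p hp) (hT q hq)).2 hpq))
      fun p hp => (hT p hp).prime.squarefree
  have hdvd : ∀ d ∈ (∏ p ∈ T, p).divisors, ∏ p ∈ d.primeFactors, p = d := fun d hd =>
    Nat.prod_primeFactors_of_squarefree (hsq.squarefree_of_dvd (Nat.dvd_of_mem_divisors hd))
  refine sum_nbij' Nat.primeFactors (fun S => ∏ p ∈ S, p) (fun d hd => ?_) (fun S hS => ?_)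
    hdvd (fun S hS => Nat.primeFactors_prod fun p hp => hT p (mem_powerset.1 hS hp))
    (fun d hd => by rw [hdvd d hd])
  · rw [mem_powerset, ← Nat.primeFactors_prod hT]
    exact Nat.primeFactors_mono (Nat.dvd_of_mem_divisors hd) hsq.ne_zero
  · exact Nat.mem_divisors.2 ⟨prod_dvd_prod_of_subset _ _ _ (mem_powerset.1 hS), hsq.ne_zero⟩

theorem map_prod_primes {M : Type*} [CommMonoid M] {g : ℕ → M} (hg1 : g 1 = 1)
    (hg : ∀ m n : ℕ, Nat.Coprime m n → g (m * n) = g m * g n) {S : Finset ℕ}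
    (hS : ∀ p ∈ S, p.Prime) : g (∏ p ∈ S, p) = ∏ p ∈ S, g p := by
  induction S using Finset.induction_on with
  | empty => simpa using hg1
  | insert p S hpS ih =>
    rw [prod_insert hpS, prod_insert hpS, hg, ih fun q hq => hS q (mem_insert_of_mem hq)]
    refine Nat.Coprime.prod_right fun q hq => (Nat.coprime_primes (hS p (mem_insert_self p S))
      (hS q (mem_insert_of_mem hq))).2 ?_
    rintro rfl
    exact hpS hq

theorem sum_powerset_prod_mul_prod_sdiff {ι R : Type*} [CommSemiring R] [DecidableEq ι]
    (T U : Finset ι) (f c : ι → R) :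
    ∑ S ∈ T.powerset, (∏ i ∈ S, f i) * ∏ i ∈ U \ S, c i
      = (∏ i ∈ U \ T, c i) * ∏ i ∈ T, (f i + if i ∈ U then c i else 1) := by
  rw [prod_add, mul_sum]
  refine sum_congr rfl fun S hS => ?_
  have hST := mem_powerset.1 hS
  have hsplit : U \ S = (U \ T) ∪ ((T \ S) ∩ U) := by
    ext i
    have := @hST i
    simp only [mem_sdiff, mem_union, mem_inter]
    tauto
  have hdisj : Disjoint (U \ T) ((T \ S) ∩ U) :=
    disjoint_left.2 fun i hi hi' => (mem_sdiff.1 hi).2 (mem_sdiff.1 (mem_inter.1 hi').1).1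
  rw [hsplit, prod_union hdisj, prod_ite_mem]
  ring

theorem prod_one_add_div_sq_le_exp (T : Finset ℕ) {B : ℝ} (hB : 0 ≤ B) :
    ∏ n ∈ T, (1 + B / (n : ℝ) ^ 2) ≤ exp (B * ∑' n : ℕ, 1 / (n : ℝ) ^ 2) := by
  refine (prod_one_add_le_exp_sum T fun n => by positivity).trans (exp_le_exp.2 ?_)
  simp_rw [div_eq_mul_one_div B, ← mul_sum]
  exact mul_le_mul_of_nonneg_left ((summable_one_div_nat_pow.2 one_lt_two).sum_le_tsum T
    fun n _ => by positivity) hB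

theorem div_le_div_floor_add_one {α : ℝ} (hα : 0 ≤ α) {n : ℕ} (hn : α < n) :
    α / n ≤ α / (⌊α⌋₊ + 1) :=
  div_le_div_of_nonneg_left hα (by positivity) (by exact_mod_cast (Nat.floor_lt hα).2 hn)

theorem div_floor_add_one_lt_one (α : ℝ) : α / (⌊α⌋₊ + 1) < 1 :=
  (div_lt_one (by positivity)).2 (Nat.lt_floor_add_one α)

theorem add_one_sub_sq_le {y u δ : ℝ} (hy : 0 ≤ y) (hyu : y ≤ u) (hu : u ≤ δ) (hδ : δ < 1) :
    y + (1 - y) ^ 2 ≤ (1 - y) * (1 + u ^ 2 / (1 - δ)) := by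
  have hu2 : u ^ 2 ≤ (1 - y) * (u ^ 2 / (1 - δ)) := by
    rw [mul_div_assoc', le_div_iff₀ (by linarith)]
    nlinarith [sq_nonneg u]
  nlinarith

theorem one_add_le_inv_one_sub {y : ℝ} (hy : 0 ≤ y) (hy1 : y < 1) : 1 + y ≤ (1 - y)⁻¹ := by
  rw [← one_div, le_div_iff₀ (by linarith)]
  nlinarith

-- `α / (⌊α⌋₊ + 1)` is the largest value of `α / p` over integers `p > α`.
noncomputable def sieveConst (α : ℝ) : ℝ :=
  exp (α ^ 2 / (1 - α / (⌊α⌋₊ + 1)) * ∑' n : ℕ, 1 / (n : ℝ) ^ 2)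

section Bounds

variable {α : ℝ} {g : ℕ → ℝ} {T U : Finset ℕ} (hα : 0 ≤ α) (hT : ∀ p ∈ T, α < p)
  (hg0 : ∀ p ∈ T, 0 ≤ g p) (hg : ∀ p ∈ T, g p ≤ α / p)
include hα hT hg0 hg

theorem prod_add_one_sub_sq_le :
    ∏ p ∈ T, (g p + (1 - g p) ^ 2) ≤ sieveConst α * ∏ p ∈ T, (1 - g p) := by
  set δ := α / (⌊α⌋₊ + 1)
  set B := α ^ 2 / (1 - δ)
  have hδ : δ < 1 := div_floor_add_one_lt_one α
  have hlocal : ∀ p ∈ T, g p + (1 - g p) ^ 2 ≤ (1 - g p) * (1 + B / (p : ℝ) ^ 2) := fun p hp => by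
    convert add_one_sub_sq_le (hg0 p hp) (hg p hp) (div_le_div_floor_add_one hα (hT p hp)) hδ
      using 3
    ring
  have hnonneg : ∀ p ∈ T, 0 ≤ 1 - g p := fun p hp => by
    linarith [(hg p hp).trans (div_le_div_floor_add_one hα (hT p hp))]
  calc ∏ p ∈ T, (g p + (1 - g p) ^ 2)
      ≤ ∏ p ∈ T, ((1 - g p) * (1 + B / (p : ℝ) ^ 2)) :=
        prod_le_prod (fun p hp => by have := hg0 p hp; positivity) hlocal
    _ = (∏ p ∈ T, (1 - g p)) * ∏ p ∈ T, (1 + B / (p : ℝ) ^ 2) := prod_mul_distrib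
    _ ≤ (∏ p ∈ T, (1 - g p)) * sieveConst α :=
        mul_le_mul_of_nonneg_left (prod_one_add_div_sq_le_exp T (by positivity))
          (prod_nonneg hnonneg)
    _ = sieveConst α * ∏ p ∈ T, (1 - g p) := mul_comm _ _

theorem prod_sdiff_mul_prod_le_of_subset (hTU : T ⊆ U) :
    (∏ p ∈ U \ T, (1 - g p) ^ 2) * ∏ p ∈ T, (g p + if p ∈ U then (1 - g p) ^ 2 else 1)
      ≤ sieveConst α * (∏ p ∈ U \ T, (1 - g p) ^ 2) * ∏ p ∈ T, (1 - g p) := by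
  simp only [add_ite]
  rw [prod_ite_of_true fun p hp => hTU hp, mul_assoc, mul_left_comm]
  exact mul_le_mul_of_nonneg_left (prod_add_one_sub_sq_le hα hT hg0 hg)
    (prod_nonneg fun p _ => sq_nonneg _)

theorem prod_sdiff_mul_prod_le_of_superset (hUT : U ⊆ T) :
    (∏ p ∈ U \ T, (1 - g p) ^ 2) * ∏ p ∈ T, (g p + if p ∈ U then (1 - g p) ^ 2 else 1)
      ≤ sieveConst α * (∏ p ∈ T \ U, (1 - g p)⁻¹) * ∏ p ∈ U, (1 - g p) := by
  have hlt : ∀ p ∈ T, g p < 1 := fun p hp =>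
    (hg p hp).trans_lt ((div_lt_one (hα.trans_lt (hT p hp))).2 (hT p hp))
  simp only [add_ite]
  rw [sdiff_eq_empty_iff_subset.2 hUT, prod_empty, one_mul, prod_ite, filter_mem_eq_inter,
    inter_eq_right.2 hUT, filter_notMem_eq_sdiff, mul_right_comm]
  refine mul_le_mul (prod_add_one_sub_sq_le hα (fun p hp => hT p (hUT hp))
      (fun p hp => hg0 p (hUT hp)) fun p hp => hg p (hUT hp))
    (prod_le_prod (fun p hp => by linarith [hg0 p (mem_sdiff.1 hp).1]) fun p hp => ?_)
    (prod_nonneg fun p hp => by linarith [hg0 p (mem_sdiff.1 hp).1])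
    (mul_nonneg (exp_pos _).le (prod_nonneg fun p hp => by linarith [hlt p (hUT hp)]))
  rw [add_comm]
  exact one_add_le_inv_one_sub (hg0 p (mem_sdiff.1 hp).1) (hlt p (mem_sdiff.1 hp).1)

end Bounds

theorem mem_primeRange {lo hi : ℝ} {a p : ℕ} :
    p ∈ primeRange lo hi a ↔ p.Prime ∧ lo < p ∧ (p : ℝ) ≤ hi ∧ ¬ p ∣ a := by
  rw [primeRange, mem_filter, mem_range, Nat.lt_succ_iff, and_iff_right_iff_imp]
  exact fun h => Nat.le_floor h.2.2.1

theorem primeRange_mono {lo hi hi' : ℝ} (a : ℕ) (h : hi ≤ hi') :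
    primeRange lo hi a ⊆ primeRange lo hi' a := fun p hp => by
  obtain ⟨hp, hlo, hhi, ha⟩ := mem_primeRange.1 hp
  exact mem_primeRange.2 ⟨hp, hlo, hhi.trans h, ha⟩

theorem sdiff_primeRange (lo hi hi' : ℝ) (a : ℕ) :
    primeRange lo hi' a \ primeRange lo hi a
      = (primeRange lo hi' a).filter (fun p : ℕ => hi < (p : ℝ)) := by
  ext p
  simp only [mem_sdiff, mem_filter, mem_primeRange, not_and, not_not, and_congr_right_iff]
  rintro ⟨hp, hlo, -, ha⟩
  exact ⟨fun h => lt_of_not_ge fun hle => ha (h hp hlo hle), fun h _ _ hle => (h.not_ge hle).elim⟩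

theorem primeRange_mul_prod {lo hi : ℝ} (a : ℕ) {S : Finset ℕ} (hS : ∀ p ∈ S, p.Prime) :
    primeRange lo hi (a * ∏ p ∈ S, p) = primeRange lo hi a \ S := by
  ext p
  simp only [mem_sdiff, mem_primeRange]
  constructor
  · rintro ⟨hp, hlo, hhi, hdvd⟩
    exact ⟨⟨hp, hlo, hhi, fun h => hdvd (h.mul_right _)⟩,
      fun hpS => hdvd ((dvd_prod_of_mem _ hpS).mul_left a)⟩
  · rintro ⟨⟨hp, hlo, hhi, ha⟩, hpS⟩
    refine ⟨hp, hlo, hhi, fun h => ?_⟩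
    rcases hp.dvd_mul.1 h with h | h
    · exact ha h
    · obtain ⟨q, hq, hpq⟩ := (Prime.dvd_finsetProd_iff hp.prime _).1 h
      rw [(Nat.prime_dvd_prime_iff_eq hp (hS q hq)).1 hpq] at hpS
      exact hpS hq

theorem sum_divisors_prod_primeRange {R : Type*} [CommSemiring R] {g : ℕ → R} (hg1 : g 1 = 1)
    (hg : ∀ m n : ℕ, Nat.Coprime m n → g (m * n) = g m * g n) (c : ℕ → R) (lo hi hi' : ℝ)
    (a : ℕ) :
    ∑ m ∈ (∏ p ∈ primeRange lo hi a, p).divisors, g m * ∏ p ∈ primeRange lo hi' (a * m), c p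
      = (∏ p ∈ primeRange lo hi' a \ primeRange lo hi a, c p)
        * ∏ p ∈ primeRange lo hi a, (g p + if p ∈ primeRange lo hi' a then c p else 1) := by
  have hprime : ∀ {hi : ℝ}, ∀ p ∈ primeRange lo hi a, p.Prime :=
    fun p hp => (mem_primeRange.1 hp).1
  rw [Nat.sum_divisors_prod_primes hprime, ← sum_powerset_prod_mul_prod_sdiff _ _ g c]
  refine sum_congr rfl fun S hS => ?_
  have hS : ∀ p ∈ S, p.Prime := fun p hp => hprime p (mem_powerset.1 hS hp)
  rw [map_prod_primes hg1 hg hS, primeRange_mul_prod a hS]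

theorem stmt_7 (α₁ : ℝ) (hα₁ : 0 < α₁) :
    ∃ K : ℝ, 0 < K ∧ ∀ g : ℕ → ℝ, (∀ n, 0 ≤ g n) → g 1 = 1 →
    (∀ m n : ℕ, Nat.Coprime m n → g (m * n) = g m * g n) →
    (∀ p : ℕ, p.Prime → g p ≤ α₁ / p) →
    ∀ (a : ℕ) (α₂ α₃ x : ℝ), 0 < α₂ → 0 < α₃ → 2 ≤ x →
    (∑ m ∈ (∏ p ∈ primeRange α₁ (x ^ α₂) a, p).divisors,
        g m * ∏ p ∈ primeRange α₁ (x ^ α₃) (a * m), (1 - g p) ^ 2)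
      ≤ K * (if α₂ ≤ α₃ then
              ∏ p ∈ (primeRange α₁ (x ^ α₃) a).filter (fun p : ℕ => x ^ α₂ < (p : ℝ)),
                (1 - g p) ^ 2
             else
              ∏ p ∈ (primeRange α₁ (x ^ α₂) a).filter (fun p : ℕ => x ^ α₃ < (p : ℝ)),
                (1 - g p)⁻¹)
        * ∏ p ∈ primeRange α₁ (x ^ min α₂ α₃) a, (1 - g p) := by
  refine ⟨sieveConst α₁, exp_pos _, fun g hg0 hg1 hgm hgp a α₂ α₃ x _ _ hx => ?_⟩
  have hT : ∀ {hi : ℝ}, ∀ p ∈ primeRange α₁ hi a, α₁ < p := fun p hp => (mem_primeRange.1 hp).2.1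
  have hg : ∀ {hi : ℝ}, ∀ p ∈ primeRange α₁ hi a, g p ≤ α₁ / p :=
    fun p hp => hgp p (mem_primeRange.1 hp).1
  have hpow : ∀ {β γ : ℝ}, β ≤ γ → x ^ β ≤ x ^ γ := rpow_le_rpow_of_exponent_le (by linarith)
  rw [sum_divisors_prod_primeRange hg1 hgm, ← sdiff_primeRange, ← sdiff_primeRange]
  split_ifs with h
  · rw [min_eq_left h]
    exact prod_sdiff_mul_prod_le_of_subset hα₁.le hT (fun p _ => hg0 p) hg
      (primeRange_mono a (hpow h))
  · rw [min_eq_right (le_of_not_ge h)]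
    exact prod_sdiff_mul_prod_le_of_superset hα₁.le hT (fun p _ => hg0 p) hg
      (primeRange_mono a (hpow (le_of_not_ge h)))
end

section
/- Let c₀, c₁, c₂ be positive constants and let F be multiplicative with F(p^e) ≤ min{c₀/p, p^(c₁ − e c₂)} for all primes p, e ≥ 1. Fix γ > 0, C > 1, C' > 0, and suppose G : ℕ → [0,∞) satisfies G(ab) ≤ G(a)·min{C^(Ω(b)), C' b^(c₂/2)} for coprime a, b. Suppose for each prime p we are given c(p) ∈ [0, γ/p]. Then for all T ≥ 1, Σ_{a ≤ T} F(a) G(a) ∏_{p | a} (1 + c(p)) ≤ 2^(γγ') · Σ_{a ≤ T} F(a) G(a), where γ' = (1 + 2(1+c₁)/c₂)·c₀·C^(1+2(1+c₁)/c₂) + C'·(2^(c₂/2) − 1)^(−1). -/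
/-!
Add the primes `q ≤ T` one at a time to the weight `∏_{p ∣ a, p ∈ P} (1 + c p)`. The new terms
come from the multiples `a = q^e m` (`q ∤ m`) of `q`, and there
`F a G a ≤ F (q^e) min (C^e, C' q^{e c₂/2}) · F m G m`, so the sum grows at most by the factor
`1 + c q ∑_e F (q^e) min (C^e, C' q^{e c₂/2}) ≤ 1 + γ γ' / q²`. The local sum is split at
`E = 1 + 2 (1 + c₁) / c₂`: below `E` each term is at most `c₀ C^E / q`; above it the bound
`F (q^e) ≤ q^{c₁ - e c₂}` leaves a geometric series of ratio `q^{-c₂/2} ≤ 2^{-c₂/2}`. Finally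
`∏ (1 + γ γ' / q²) ≤ exp (γ γ' ∑ 1/q²)` and `∑_{n ≥ 2} 1/n² = π²/6 - 1 < log 2`.
-/

open Finset

lemma Nat.primeFactors_ordCompl (n p : ℕ) :
    (ordCompl[p] n).primeFactors = n.primeFactors.erase p := by
  rw [← Nat.support_factorization, Nat.factorization_ordCompl, Finsupp.support_erase,
    Nat.support_factorization]

lemma sum_filter_dvd_le_sum_mul_sum {q : ℕ} (hq : q.Prime) (N : ℕ) {L X : ℕ → ℝ}
    (hL : ∀ e, 0 ≤ L e) (hX : ∀ m, 0 ≤ X m) :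
    ∑ a ∈ (Icc 1 N).filter (q ∣ ·), L (a.factorization q) * X (ordCompl[q] a)
      ≤ (∑ e ∈ Icc 1 N, L e) * ∑ m ∈ Icc 1 N, X m := by
  set φ : ℕ → ℕ × ℕ := fun a => (a.factorization q, ordCompl[q] a)
  have hinj : Set.InjOn φ ((Icc 1 N).filter (q ∣ ·)) := fun a _ b _ h => by
    obtain ⟨hv, hm⟩ := Prod.ext_iff.mp h
    rw [← Nat.ordProj_mul_ordCompl_eq_self a q, ← Nat.ordProj_mul_ordCompl_eq_self b q]
    exact congrArg₂ (· * ·) (congrArg (q ^ ·) hv) hm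
  have hmaps : ((Icc 1 N).filter (q ∣ ·)).image φ ⊆ Icc 1 N ×ˢ Icc 1 N := by
    simp only [subset_iff, mem_image, mem_filter, mem_Icc, mem_product]
    rintro _ ⟨a, ⟨⟨ha1, haN⟩, hqa⟩, rfl⟩
    have ha0 : a ≠ 0 := by omega
    have hv := hq.factorization_pos_of_dvd ha0 hqa
    have hvlt := Nat.factorization_lt q ha0
    have hm := Nat.ordCompl_pos q ha0
    have hmle := Nat.ordCompl_le a q
    simp only [φ]
    omega
  rw [sum_mul_sum, ← sum_product']
  calc _ = ∑ y ∈ ((Icc 1 N).filter (q ∣ ·)).image φ, L y.1 * X y.2 :=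
        (sum_image (f := fun y : ℕ × ℕ => L y.1 * X y.2) hinj).symm
    _ ≤ _ := sum_le_sum_of_subset_of_nonneg hmaps fun y _ _ => mul_nonneg (hL _) (hX _)

section Twisted

variable {F G β c : ℕ → ℝ}

lemma mul_le_mul_ordCompl (hF0 : ∀ n, 0 ≤ F n)
    (hFmul : ∀ m n : ℕ, m.Coprime n → F (m * n) = F m * F n)
    (hG : ∀ a b : ℕ, 0 < a → 0 < b → a.Coprime b → G (a * b) ≤ G a * β b)
    {q a : ℕ} (hq : q.Prime) (ha : a ≠ 0) :
    F a * G a ≤ F (q ^ a.factorization q) * β (q ^ a.factorization q) *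
      (F (ordCompl[q] a) * G (ordCompl[q] a)) := by
  set e := a.factorization q
  set m := ordCompl[q] a
  have hcop : m.Coprime (q ^ e) := ((Nat.coprime_ordCompl hq ha).pow_left e).symm
  have hma : m * q ^ e = a := by rw [mul_comm]; exact Nat.ordProj_mul_ordCompl_eq_self a q
  calc F a * G a = F m * F (q ^ e) * G (m * q ^ e) := by rw [← hFmul _ _ hcop, hma]
    _ ≤ F m * F (q ^ e) * (G m * β (q ^ e)) :=
        mul_le_mul_of_nonneg_left
          (hG _ _ (Nat.ordCompl_pos q ha) (pow_pos hq.pos e) hcop)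
          (mul_nonneg (hF0 _) (hF0 _))
    _ = _ := by ring

variable (F G c) in
noncomputable def twistedSum (N : ℕ) (P : Finset ℕ) : ℝ :=
  ∑ a ∈ Icc 1 N, F a * G a * ∏ p ∈ a.primeFactors ∩ P, (1 + c p)

lemma twistedSum_insert_le (hF0 : ∀ n, 0 ≤ F n)
    (hFmul : ∀ m n : ℕ, m.Coprime n → F (m * n) = F m * F n) (hG0 : ∀ n, 0 ≤ G n)
    (hG : ∀ a b : ℕ, 0 < a → 0 < b → a.Coprime b → G (a * b) ≤ G a * β b)
    (hβ : ∀ n, 0 ≤ β n) (hc : ∀ p, p.Prime → 0 ≤ c p) (N : ℕ) {P : Finset ℕ} {q : ℕ}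
    (hq : q.Prime) (hqP : q ∉ P) :
    twistedSum F G c N (insert q P)
      ≤ (1 + c q * ∑ e ∈ Icc 1 N, F (q ^ e) * β (q ^ e)) * twistedSum F G c N P := by
  set Φ : ℕ → ℝ := fun a => ∏ p ∈ a.primeFactors ∩ P, (1 + c p)
  have hΦ0 : ∀ a, 0 ≤ Φ a := fun a => prod_nonneg fun p hp => by
    linarith [hc p (Nat.prime_of_mem_primeFactors (mem_inter.mp hp).1)]
  have hΦ : ∀ a, Φ (ordCompl[q] a) = Φ a := fun a => by
    simp only [Φ, Nat.primeFactors_ordCompl, erase_inter, erase_eq_of_notMem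
      (fun h => hqP (mem_inter.mp h).2)]
  have hsplit : twistedSum F G c N (insert q P)
      = twistedSum F G c N P + c q * ∑ a ∈ (Icc 1 N).filter (q ∣ ·), F a * G a * Φ a := by
    rw [mul_sum, sum_filter, twistedSum, twistedSum, ← sum_add_distrib]
    refine sum_congr rfl fun a ha => ?_
    have ha0 : a ≠ 0 := by rw [mem_Icc] at ha; omega
    by_cases hqa : q ∣ a
    · have hqa' : q ∈ a.primeFactors := Nat.mem_primeFactors.mpr ⟨hq, hqa, ha0⟩
      rw [inter_insert_of_mem hqa', prod_insert fun h => hqP (mem_inter.mp h).2, if_pos hqa]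
      ring
    · have hqa' : q ∉ a.primeFactors := fun h => hqa (Nat.dvd_of_mem_primeFactors h)
      rw [inter_insert_of_notMem hqa', if_neg hqa, add_zero]
  have hL : ∀ e, 0 ≤ F (q ^ e) * β (q ^ e) := fun e => mul_nonneg (hF0 _) (hβ _)
  have hmultiples : ∑ a ∈ (Icc 1 N).filter (q ∣ ·), F a * G a * Φ a
      ≤ (∑ e ∈ Icc 1 N, F (q ^ e) * β (q ^ e)) * twistedSum F G c N P := by
    refine le_trans (sum_le_sum fun a ha => ?_) (sum_filter_dvd_le_sum_mul_sum hq N hL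
      (X := fun m => F m * G m * Φ m) fun m => mul_nonneg (mul_nonneg (hF0 m) (hG0 m)) (hΦ0 m))
    have ha0 : a ≠ 0 := by rw [mem_filter, mem_Icc] at ha; omega
    rw [← hΦ a, ← mul_assoc]
    exact mul_le_mul_of_nonneg_right (mul_le_mul_ordCompl hF0 hFmul hG hq ha0) (hΦ0 _)
  have hS0 : 0 ≤ twistedSum F G c N P :=
    sum_nonneg fun a _ => mul_nonneg (mul_nonneg (hF0 a) (hG0 a)) (hΦ0 a)
  rw [hsplit]
  nlinarith [mul_le_mul_of_nonneg_left hmultiples (hc q hq)]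

lemma twistedSum_le_prod_mul (hF0 : ∀ n, 0 ≤ F n)
    (hFmul : ∀ m n : ℕ, m.Coprime n → F (m * n) = F m * F n) (hG0 : ∀ n, 0 ≤ G n)
    (hG : ∀ a b : ℕ, 0 < a → 0 < b → a.Coprime b → G (a * b) ≤ G a * β b)
    (hβ : ∀ n, 0 ≤ β n) (hc : ∀ p, p.Prime → 0 ≤ c p) (N : ℕ) {P : Finset ℕ}
    (hP : ∀ q ∈ P, q.Prime) :
    twistedSum F G c N P ≤ (∏ q ∈ P, (1 + c q * ∑ e ∈ Icc 1 N, F (q ^ e) * β (q ^ e))) *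
      ∑ a ∈ Icc 1 N, F a * G a := by
  induction P using Finset.induction_on with
  | empty => simp [twistedSum]
  | @insert q P hqP ih =>
    have hq := hP q (mem_insert_self q P)
    have hδ : 0 ≤ 1 + c q * ∑ e ∈ Icc 1 N, F (q ^ e) * β (q ^ e) :=
      add_nonneg zero_le_one
        (mul_nonneg (hc q hq) (sum_nonneg fun e _ => mul_nonneg (hF0 _) (hβ _)))
    rw [prod_insert hqP, mul_assoc]
    exact (twistedSum_insert_le hF0 hFmul hG0 hG hβ hc N hq hqP).trans
      (mul_le_mul_of_nonneg_left (ih fun q hq => hP q (mem_insert_of_mem hq)) hδ)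

lemma sum_mul_prod_one_add_le (hF0 : ∀ n, 0 ≤ F n)
    (hFmul : ∀ m n : ℕ, m.Coprime n → F (m * n) = F m * F n) (hG0 : ∀ n, 0 ≤ G n)
    (hG : ∀ a b : ℕ, 0 < a → 0 < b → a.Coprime b → G (a * b) ≤ G a * β b)
    (hβ : ∀ n, 0 ≤ β n) (hc : ∀ p, p.Prime → 0 ≤ c p) (N : ℕ) :
    ∑ a ∈ Icc 1 N, F a * G a * ∏ p ∈ a.primeFactors, (1 + c p)
      ≤ (∏ q ∈ (N + 1).primesBelow, (1 + c q * ∑ e ∈ Icc 1 N, F (q ^ e) * β (q ^ e))) *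
        ∑ a ∈ Icc 1 N, F a * G a := by
  refine le_of_eq_of_le (sum_congr rfl fun a ha => ?_)
    (twistedSum_le_prod_mul hF0 hFmul hG0 hG hβ hc N fun q hq => Nat.prime_of_mem_primesBelow hq)
  rw [inter_eq_left.mpr fun p hp => Nat.mem_primesBelow.mpr
    ⟨Nat.lt_succ_of_le ((Nat.le_of_mem_primeFactors hp).trans (mem_Icc.mp ha).2),
      Nat.prime_of_mem_primeFactors hp⟩]

end Twisted

lemma sum_one_div_sq_le_log_two {Q : Finset ℕ} (hQ : 1 ∉ Q) :
    ∑ n ∈ Q, 1 / (n : ℝ) ^ 2 ≤ Real.log 2 := by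
  have h := hasSum_zeta_two.summable.sum_le_tsum (insert 1 Q) fun _ _ => by positivity
  rw [sum_insert hQ, hasSum_zeta_two.tsum_eq] at h
  have := Real.pi_lt_d2
  have := Real.log_two_gt_d9
  rw [Nat.cast_one, one_pow, div_one] at h
  nlinarith [Real.pi_pos]

lemma prod_one_add_le_two_rpow {Q : Finset ℕ} (hQ : 1 ∉ Q) {κ : ℝ} (hκ : 0 ≤ κ) {δ : ℕ → ℝ}
    (hδ0 : ∀ q ∈ Q, 0 ≤ δ q) (hδ : ∀ q ∈ Q, δ q ≤ κ / (q : ℝ) ^ 2) :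
    ∏ q ∈ Q, (1 + δ q) ≤ 2 ^ κ := by
  calc ∏ q ∈ Q, (1 + δ q) ≤ ∏ q ∈ Q, Real.exp (κ * (1 / (q : ℝ) ^ 2)) := by
        refine prod_le_prod (fun q hq => by linarith [hδ0 q hq]) fun q hq => ?_
        rw [mul_one_div, add_comm]
        exact (add_le_add_left (hδ q hq) 1).trans (Real.add_one_le_exp _)
    _ = Real.exp (κ * ∑ q ∈ Q, 1 / (q : ℝ) ^ 2) := by rw [mul_sum, Real.exp_sum]
    _ ≤ Real.exp (κ * Real.log 2) := by gcongr; exact sum_one_div_sq_le_log_two hQ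
    _ = 2 ^ κ := by rw [Real.rpow_def_of_pos two_pos, mul_comm]

lemma sum_Icc_floor_mul_pow_le {c₀ C E p : ℝ} (hc₀ : 0 ≤ c₀) (hC : 1 ≤ C) (hE : 0 ≤ E)
    (hp : 0 < p) {x : ℕ → ℝ} (hx : ∀ e, 1 ≤ e → x e ≤ c₀ / p) :
    ∑ e ∈ Icc 1 ⌊E⌋₊, x e * C ^ e ≤ E * c₀ * C ^ E / p := by
  have hterm : ∀ e ∈ Icc 1 ⌊E⌋₊, x e * C ^ e ≤ c₀ / p * C ^ E := fun e he => by
    rw [mem_Icc] at he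
    have hCe : C ^ e ≤ C ^ E := by
      rw [← Real.rpow_natCast]
      exact Real.rpow_le_rpow_of_exponent_le hC ((Nat.cast_le.mpr he.2).trans (Nat.floor_le hE))
    exact mul_le_mul (hx e he.1) hCe (by positivity) (by positivity)
  calc _ ≤ #(Icc 1 ⌊E⌋₊) • (c₀ / p * C ^ E) := sum_le_card_nsmul _ _ _ hterm
    _ = ⌊E⌋₊ * (c₀ / p * C ^ E) := by rw [Nat.card_Icc, nsmul_eq_mul, Nat.add_sub_cancel]
    _ ≤ E * (c₀ / p * C ^ E) := by gcongr; exact Nat.floor_le hE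
    _ = _ := by ring

lemma sum_Ico_mul_rpow_le {c₁ c₂ C' p : ℝ} (hc₂ : 0 < c₂) (hC' : 0 ≤ C') (hp : 2 ≤ p)
    {x : ℕ → ℝ} (hx : ∀ e, 1 ≤ e → x e ≤ p ^ (c₁ - e * c₂)) (K : ℕ) :
    ∑ e ∈ Ico (⌊1 + 2 * (1 + c₁) / c₂⌋₊ + 1) K, x e * (C' * (p ^ e) ^ (c₂ / 2))
      ≤ C' * ((2 : ℝ) ^ (c₂ / 2) - 1)⁻¹ / p := by
  set E := 1 + 2 * (1 + c₁) / c₂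
  set e₀ := ⌊E⌋₊ + 1
  have hp0 : 0 < p := by linarith
  set r : ℝ := p ^ (-(c₂ / 2))
  set t : ℝ := 2 ^ (c₂ / 2)
  have hr0 : 0 < r := by positivity
  have ht1 : 1 < t := Real.one_lt_rpow (by norm_num) (by positivity)
  have hrt : r * t ≤ 1 := by
    rw [show r = (p ^ (c₂ / 2))⁻¹ from Real.rpow_neg hp0.le _, inv_mul_le_one₀ (by positivity)]
    exact Real.rpow_le_rpow (by norm_num) hp (by positivity)
  have hr1 : r < 1 := by nlinarith
  have hterm : ∀ e ∈ Ico e₀ K, x e * (C' * (p ^ e) ^ (c₂ / 2)) ≤ C' * p ^ c₁ * r ^ e := by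
    intro e he
    have he1 : 1 ≤ e := by rw [mem_Ico] at he; omega
    have h1 : (p ^ e) ^ (c₂ / 2) = p ^ (e * (c₂ / 2)) := by
      rw [← Real.rpow_natCast, ← Real.rpow_mul hp0.le]
    have h2 : r ^ e = p ^ (-(c₂ / 2) * e) := by
      rw [← Real.rpow_natCast, ← Real.rpow_mul hp0.le]
    have hid : p ^ (c₁ - e * c₂) * (p ^ e) ^ (c₂ / 2) = p ^ c₁ * r ^ e := by
      rw [h1, h2, ← Real.rpow_add hp0, ← Real.rpow_add hp0]
      ring_nf
    calc x e * (C' * (p ^ e) ^ (c₂ / 2))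
        ≤ p ^ (c₁ - e * c₂) * (C' * (p ^ e) ^ (c₂ / 2)) :=
          mul_le_mul_of_nonneg_right (hx e he1) (by positivity)
      _ = C' * p ^ c₁ * r ^ e := by linear_combination C' * hid
  have hE : c₁ - c₂ / 2 * E = -1 + -(c₂ / 2) := by
    simp only [E]
    field_simp
    ring
  have hre₀ : p ^ c₁ * r ^ e₀ ≤ r / p := by
    have he₀ : E ≤ e₀ := by
      simp only [e₀, Nat.cast_add, Nat.cast_one]
      exact (Nat.lt_floor_add_one E).le
    calc p ^ c₁ * r ^ e₀ ≤ p ^ c₁ * r ^ E := by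
          gcongr
          rw [← Real.rpow_natCast]
          exact Real.rpow_le_rpow_of_exponent_ge hr0 hr1.le he₀
      _ = p ^ (c₁ - c₂ / 2 * E) := by
          rw [← Real.rpow_mul hp0.le, ← Real.rpow_add hp0]
          ring_nf
      _ = r / p := by
          rw [hE, Real.rpow_add hp0, Real.rpow_neg_one]
          ring
  have hgeom : r / (1 - r) ≤ (t - 1)⁻¹ := by
    rw [div_le_iff₀ (by linarith), inv_mul_eq_div, le_div_iff₀ (by linarith)]
    nlinarith
  calc _ ≤ ∑ e ∈ Ico e₀ K, C' * p ^ c₁ * r ^ e := sum_le_sum hterm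
    _ = C' * p ^ c₁ * ∑ e ∈ Ico e₀ K, r ^ e := by rw [mul_sum]
    _ ≤ C' * p ^ c₁ * (r ^ e₀ / (1 - r)) := by
        gcongr
        exact geom_sum_Ico_le_of_lt_one hr0.le hr1
    _ = C' * (p ^ c₁ * r ^ e₀) / (1 - r) := by ring
    _ ≤ C' * (r / p) / (1 - r) := by gcongr
    _ = C' * (r / (1 - r)) / p := by ring
    _ ≤ C' * (t - 1)⁻¹ / p := by gcongr

lemma sum_mul_min_le {c₀ c₁ c₂ C C' p : ℝ} (hc₀ : 0 ≤ c₀) (hc₁ : -1 ≤ c₁) (hc₂ : 0 < c₂)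
    (hC : 1 ≤ C) (hC' : 0 ≤ C') (hp : 2 ≤ p) {x : ℕ → ℝ} (hx0 : ∀ e, 0 ≤ x e)
    (hx : ∀ e, 1 ≤ e → x e ≤ min (c₀ / p) (p ^ (c₁ - e * c₂))) (K : ℕ) :
    ∑ e ∈ Icc 1 K, x e * min (C ^ e) (C' * (p ^ e) ^ (c₂ / 2))
      ≤ ((1 + 2 * (1 + c₁) / c₂) * c₀ * C ^ (1 + 2 * (1 + c₁) / c₂)
          + C' * ((2 : ℝ) ^ (c₂ / 2) - 1)⁻¹) / p := by
  set E := 1 + 2 * (1 + c₁) / c₂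
  set M := ⌊E⌋₊
  have hp0 : 0 < p := by linarith
  have hE : 0 ≤ E := by
    have : 0 ≤ 1 + c₁ := by linarith
    positivity
  have hcover : Icc 1 K ⊆ Icc 1 M ∪ Ico (M + 1) (K + 1) := fun e he => by
    simp only [mem_union, mem_Icc, mem_Ico] at he ⊢
    omega
  have hdisj : Disjoint (Icc 1 M) (Ico (M + 1) (K + 1)) := disjoint_left.mpr fun e h1 h2 => by
    simp only [mem_Icc, mem_Ico] at h1 h2
    omega
  calc _ ≤ ∑ e ∈ Icc 1 M ∪ Ico (M + 1) (K + 1), x e * min (C ^ e) (C' * (p ^ e) ^ (c₂ / 2)) :=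
        sum_le_sum_of_subset_of_nonneg hcover fun e _ _ =>
          mul_nonneg (hx0 e) (le_min (by positivity) (by positivity))
    _ = ∑ e ∈ Icc 1 M, x e * min (C ^ e) (C' * (p ^ e) ^ (c₂ / 2))
        + ∑ e ∈ Ico (M + 1) (K + 1), x e * min (C ^ e) (C' * (p ^ e) ^ (c₂ / 2)) :=
        sum_union hdisj
    _ ≤ ∑ e ∈ Icc 1 M, x e * C ^ e
        + ∑ e ∈ Ico (M + 1) (K + 1), x e * (C' * (p ^ e) ^ (c₂ / 2)) :=
        add_le_add (sum_le_sum fun e _ => mul_le_mul_of_nonneg_left (min_le_left _ _) (hx0 e))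
          (sum_le_sum fun e _ => mul_le_mul_of_nonneg_left (min_le_right _ _) (hx0 e))
    _ ≤ E * c₀ * C ^ E / p + C' * ((2 : ℝ) ^ (c₂ / 2) - 1)⁻¹ / p :=
        add_le_add
          (sum_Icc_floor_mul_pow_le hc₀ hC hE hp0 fun e he => (hx e he).trans (min_le_left _ _))
          (sum_Ico_mul_rpow_le hc₂ hC' hp (fun e he => (hx e he).trans (min_le_right _ _)) _)
    _ = _ := by rw [add_div]

theorem stmt_10_general (c₀ c₁ c₂ γ C C' : ℝ) (h₀ : 0 < c₀) (h₁ : 0 < c₁) (h₂ : 0 < c₂)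
    (hγ : 0 < γ) (hC : 1 < C) (hC' : 0 < C')
    (F : ℕ → ℝ) (hF0 : ∀ n, 0 ≤ F n)
    (hFmul : ∀ m n : ℕ, Nat.Coprime m n → F (m * n) = F m * F n)
    (hFp : ∀ p e : ℕ, p.Prime → 1 ≤ e →
      F (p ^ e) ≤ min (c₀ / p) ((p : ℝ) ^ (c₁ - (e : ℝ) * c₂)))
    (G : ℕ → ℝ) (hG0 : ∀ n, 0 ≤ G n)
    (hG : ∀ a b : ℕ, 0 < a → 0 < b → Nat.Coprime a b →
      G (a * b) ≤ G a * min (C ^ b.primeFactorsList.length) (C' * (b : ℝ) ^ (c₂ / 2)))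
    (c : ℕ → ℝ) (hc : ∀ p : ℕ, p.Prime → 0 ≤ c p ∧ c p ≤ γ / p)
    (T : ℝ) :
    (∑ a ∈ Finset.Icc 1 ⌊T⌋₊, F a * G a * ∏ p ∈ a.primeFactors, (1 + c p))
      ≤ (2 : ℝ) ^ (γ * ((1 + 2 * (1 + c₁) / c₂) * c₀ * C ^ (1 + 2 * (1 + c₁) / c₂)
            + C' * ((2 : ℝ) ^ (c₂ / 2) - 1)⁻¹))
        * ∑ a ∈ Finset.Icc 1 ⌊T⌋₊, F a * G a := by
  set N := ⌊T⌋₊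
  set g := (1 + 2 * (1 + c₁) / c₂) * c₀ * C ^ (1 + 2 * (1 + c₁) / c₂)
    + C' * ((2 : ℝ) ^ (c₂ / 2) - 1)⁻¹
  set β : ℕ → ℝ := fun b => min (C ^ b.primeFactorsList.length) (C' * (b : ℝ) ^ (c₂ / 2))
  have hβ : ∀ b, 0 ≤ β b := fun b => le_min (by positivity) (by positivity)
  have hβsum : ∀ q, 0 ≤ ∑ e ∈ Icc 1 N, F (q ^ e) * β (q ^ e) :=
    fun q => sum_nonneg fun e _ => mul_nonneg (hF0 _) (hβ _)
  have hg : 0 ≤ g := by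
    have ht : 1 < (2 : ℝ) ^ (c₂ / 2) := Real.one_lt_rpow (by norm_num) (by positivity)
    exact add_nonneg (by positivity) (mul_nonneg hC'.le (inv_nonneg.mpr (by linarith)))
  have hfactor : ∀ q ∈ (N + 1).primesBelow,
      c q * ∑ e ∈ Icc 1 N, F (q ^ e) * β (q ^ e) ≤ γ * g / (q : ℝ) ^ 2 := fun q hq => by
    have hq := Nat.prime_of_mem_primesBelow hq
    have hlocal : ∑ e ∈ Icc 1 N, F (q ^ e) * β (q ^ e) ≤ g / q := by
      simp only [β, hq.primeFactorsList_pow, List.length_replicate, Nat.cast_pow]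
      exact sum_mul_min_le h₀.le (by linarith) h₂ hC.le hC'.le (by exact_mod_cast hq.two_le)
        (fun e => hF0 _) (fun e he => hFp q e hq he) N
    calc c q * ∑ e ∈ Icc 1 N, F (q ^ e) * β (q ^ e) ≤ γ / q * (g / q) :=
          mul_le_mul (hc q hq).2 hlocal (hβsum q) (div_nonneg hγ.le (Nat.cast_nonneg q))
      _ = γ * g / (q : ℝ) ^ 2 := by ring
  calc _ ≤ _ := sum_mul_prod_one_add_le hF0 hFmul hG0 hG hβ (fun p hp => (hc p hp).1) N
    _ ≤ 2 ^ (γ * g) * ∑ a ∈ Icc 1 N, F a * G a := by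
        gcongr
        · exact sum_nonneg fun a _ => mul_nonneg (hF0 a) (hG0 a)
        · exact prod_one_add_le_two_rpow
            (fun h => Nat.not_prime_one (Nat.prime_of_mem_primesBelow h)) (mul_nonneg hγ.le hg)
            (fun q hq => mul_nonneg (hc q (Nat.prime_of_mem_primesBelow hq)).1 (hβsum q)) hfactor

theorem stmt_10 (c₀ c₁ c₂ γ C C' : ℝ) (h₀ : 0 < c₀) (h₁ : 0 < c₁) (h₂ : 0 < c₂)
    (hγ : 0 < γ) (hC : 1 < C) (hC' : 0 < C')
    (F : ℕ → ℝ) (hF0 : ∀ n, 0 ≤ F n) (hF1 : F 1 = 1)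
    (hFmul : ∀ m n : ℕ, Nat.Coprime m n → F (m * n) = F m * F n)
    (hFp : ∀ p e : ℕ, p.Prime → 1 ≤ e →
      F (p ^ e) ≤ min (c₀ / p) ((p : ℝ) ^ (c₁ - (e : ℝ) * c₂)))
    (G : ℕ → ℝ) (hG0 : ∀ n, 0 ≤ G n)
    (hG : ∀ a b : ℕ, 0 < a → 0 < b → Nat.Coprime a b →
      G (a * b) ≤ G a * min (C ^ b.primeFactorsList.length) (C' * (b : ℝ) ^ (c₂ / 2)))
    (c : ℕ → ℝ) (hc : ∀ p : ℕ, p.Prime → 0 ≤ c p ∧ c p ≤ γ / p)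
    (T : ℝ) (hT : 1 ≤ T) :
    (∑ a ∈ Finset.Icc 1 ⌊T⌋₊, F a * G a * ∏ p ∈ a.primeFactors, (1 + c p))
      ≤ (2 : ℝ) ^ (γ * ((1 + 2 * (1 + c₁) / c₂) * c₀ * C ^ (1 + 2 * (1 + c₁) / c₂)
            + C' * ((2 : ℝ) ^ (c₂ / 2) - 1)⁻¹))
        * ∑ a ∈ Finset.Icc 1 ⌊T⌋₊, F a * G a :=
  stmt_10_general c₀ c₁ c₂ γ C C' h₀ h₁ h₂ hγ hC hC' F hF0 hFmul hFp G hG0 hG c hc T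
end
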